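/- arXiv:1806.06398 — 2 statements merged into one kernel-verified Lean document; each statement's English description precedes it below -/
import Mathlib

section
/- Fix η ∈ (0,1) and ξ ≤ L^η, and let C_ξ = {(u,w) ∈ R² : |w| ≤ ξ|u|} denote the horizontal cone. For L sufficiently large, if p = (x,y) ∈ T² with |2 + 2πL cos(2πx)| > 2L^η, then the differential dF_p of F(x,y) = (f(x) − y mod 1, x), where f(x) = 2x + L sin(2πx), maps C_ξ into C_{ξ'} for any ξ' ≥ 1/(2L^η − ξ). -/
open Real

/-! Outside the cone the term `a u` of `dF_p(u, w) = (a u + w, -u)` dominates `w`: the first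
coordinate has size at least `(|a| - ξ) |u|`, so the slope of the image is at most
`1 / (|a| - ξ)`, and `|a| > 2 L^η` with `ξ ≤ L^η` makes this at most `1 / (2 L^η - ξ)`. -/

theorem sub_mul_abs_le_abs_mul_add {a ξ u w : ℝ} (hw : |w| ≤ ξ * |u|) :
    (|a| - ξ) * |u| ≤ |a * u + w| :=
  calc (|a| - ξ) * |u| ≤ |a * u| - |w| := by rw [abs_mul]; linarith
    _ ≤ |a * u + w| := by simpa using abs_sub_abs_le_abs_sub (a * u) (-w)

theorem abs_le_mul_abs_mul_add {a ξ ξ' u w : ℝ} (hw : |w| ≤ ξ * |u|) (hgap : 0 < |a| - ξ)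
    (hξ' : 1 / (|a| - ξ) ≤ ξ') : |u| ≤ ξ' * |a * u + w| :=
  calc |u| = 1 / (|a| - ξ) * ((|a| - ξ) * |u|) := by field_simp
    _ ≤ ξ' * ((|a| - ξ) * |u|) := by gcongr
    _ ≤ ξ' * |a * u + w| := by
      gcongr
      · exact (one_div_pos.mpr hgap).le.trans hξ'
      · exact sub_mul_abs_le_abs_mul_add hw

theorem stmt3_general (η : ℝ) :
    ∃ L₀ : ℝ, ∀ L ≥ L₀, ∀ ξ : ℝ, 0 ≤ ξ → ξ ≤ L ^ η →
      ∀ x : ℝ, 2 * L ^ η < |2 + 2 * π * L * Real.cos (2 * π * x)| →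
      ∀ ξ' : ℝ, 1 / (2 * L ^ η - ξ) ≤ ξ' →
      ∀ u w : ℝ, |w| ≤ ξ * |u| →
        |(-u)| ≤ ξ' * |(2 + 2 * π * L * Real.cos (2 * π * x)) * u + w| := by
  refine ⟨1, fun L hL ξ _ hξL x hfx ξ' hξ' u w hw => ?_⟩
  have hLη : 0 < L ^ η := rpow_pos_of_pos (by linarith) η
  rw [abs_neg]
  refine abs_le_mul_abs_mul_add hw (by linarith) (le_trans ?_ hξ')
  exact one_div_le_one_div_of_le (by linarith) (by linarith)

/-- cone invariance for the standard map `F(x,y) = (f(x) − y, x)`,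
`f(x) = 2x + L sin(2πx)`. At a point `p = (x,y)` with `|f'(x)| = |2 + 2πL cos(2πx)| > 2L^η`,
the differential `dF_p(u,w) = (f'(x)u + w, −u)` maps the horizontal cone
`C_ξ = {|w| ≤ ξ|u|}` into `C_{ξ'}` for any `ξ' ≥ 1/(2L^η − ξ)`, provided `0 ≤ ξ ≤ L^η`
and `L` is sufficiently large. -/
theorem stmt3 (η : ℝ) (hη : η ∈ Set.Ioo (0:ℝ) 1) :
    ∃ L₀ : ℝ, ∀ L ≥ L₀, ∀ ξ : ℝ, 0 ≤ ξ → ξ ≤ L ^ η →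
      ∀ x : ℝ, 2 * L ^ η < |2 + 2 * π * L * Real.cos (2 * π * x)| →
      ∀ ξ' : ℝ, 1 / (2 * L ^ η - ξ) ≤ ξ' →
      ∀ u w : ℝ, |w| ≤ ξ * |u| →
        |(-u)| ≤ ξ' * |(2 + 2 * π * L * Real.cos (2 * π * x)) * u + w| :=
  stmt3_general η
end

section
/- Let (a_k), (b_k), (c_k), (d_k) be sequences of nonnegative reals, L ≥ 1 large, and C > 0 a constant, satisfying the recursions: d_{k+1} ≤ d_k + C(L^{−1/2}(b_k + c_k) + L^{−3/4} a_k); c_{k+1} ≤ (1/2) c_k + C L^{−1/2} a_k; b_{k+1} ≤ C(c_k + L^{−1/2} a_k); a_{k+1} ≤ a_k + b_k; with a_k + b_k + c_k + d_k ≤ 1 for all k, and initial conditions a_0 = 1, b_0 = c_0 = d_0 = 0. Then there is a constant C' depending only on C such that for all n ≥ 1: b_n ≤ C' L^{−1/2}, c_n ≤ C' L^{−1/2}, and d_n ≤ C' n L^{−3/4}. -/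
open Real

/-- mass-propagation recursion, abstracting Proposition 3.5: nonnegative
sequences `a,b,c,d` satisfying the stated recursions with `a_0 = 1`,
`b_0 = c_0 = d_0 = 0`, total mass `≤ 1`, and `C L^{−1/4} ≤ 1/4`, obey
`b_n, c_n ≤ C' L^{−1/2}` and `d_n ≤ C' n L^{−3/4}` for all `n ≥ 1`, where `C'` depends
only on `C`. -/
theorem stmt16 (C : ℝ) (hC : 0 < C) :
    ∃ C' > (0:ℝ), ∀ L : ℝ, 1 ≤ L → C * L ^ (-(1:ℝ)/4) ≤ 1/4 →
    ∀ a b c d : ℕ → ℝ,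
      (∀ k, 0 ≤ a k) → (∀ k, 0 ≤ b k) → (∀ k, 0 ≤ c k) → (∀ k, 0 ≤ d k) →
      (∀ k, a k + b k + c k + d k ≤ 1) →
      (∀ k, d (k + 1) ≤ d k + C * (L ^ (-(1:ℝ)/2) * (b k + c k) + L ^ (-(3:ℝ)/4) * a k)) →
      (∀ k, c (k + 1) ≤ (1/2) * c k + C * L ^ (-(1:ℝ)/2) * a k) →
      (∀ k, b (k + 1) ≤ C * (c k + L ^ (-(1:ℝ)/2) * a k)) →
      (∀ k, a (k + 1) ≤ a k + b k) →
      a 0 = 1 → b 0 = 0 → c 0 = 0 → d 0 = 0 →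
      ∀ n : ℕ, 1 ≤ n →
        b n ≤ C' * L ^ (-(1:ℝ)/2) ∧ c n ≤ C' * L ^ (-(1:ℝ)/2) ∧
        d n ≤ C' * n * L ^ (-(3:ℝ)/4) := by
  refine ⟨C * (2*C^2 + 3*C + 1) + 2*C^2 + 3*C + 1, by nlinarith, ?_⟩
  intro L hL _ a b c d ha hb hc hd hmass hdrec hcrec hbrec harec ha0 hb0 hc0 hd0 n hn
  have hL0 : (0:ℝ) < L := lt_of_lt_of_le one_pos hL
  set s := L ^ (-(1:ℝ)/2) with hs_def
  set t := L ^ (-(3:ℝ)/4) with ht_def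
  have hs : 0 < s := rpow_pos_of_pos hL0 _
  have ht : 0 < t := rpow_pos_of_pos hL0 _
  have hst : s * s ≤ t := by
    rw [hs_def, ht_def, ← Real.rpow_add hL0]
    exact Real.rpow_le_rpow_of_exponent_le hL (by norm_num)
  -- a_k ≤ 1
  have ha1 : ∀ k, a k ≤ 1 := fun k => by
    have := hmass k; have := hb k; have := hc k; have := hd k; linarith
  -- c bound
  have hcb : ∀ k, c k ≤ 2 * C * s := by
    intro k
    induction k with
    | zero => rw [hc0]; positivity
    | succ k ih =>
      have h1 := hcrec k
      have h2 : C * s * a k ≤ C * s * 1 :=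
        mul_le_mul_of_nonneg_left (ha1 k) (by positivity)
      linarith
  -- b bound
  have hbb : ∀ k, b k ≤ (2*C^2 + C) * s := by
    intro k
    cases k with
    | zero => rw [hb0]; positivity
    | succ k =>
      have h1 := hbrec k
      have h2 : s * a k ≤ s * 1 := mul_le_mul_of_nonneg_left (ha1 k) hs.le
      have h3 : C * (c k + s * a k) ≤ C * (2 * C * s + s) :=
        mul_le_mul_of_nonneg_left (by linarith [hcb k]) hC.le
      nlinarith
  -- d bound
  have hdb : ∀ k : ℕ, d k ≤ (k : ℝ) * (C * (2*C^2 + 3*C + 1)) * t := by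
    intro k
    induction k with
    | zero => rw [hd0]; simp
    | succ k ih =>
      have h1 := hdrec k
      have h5 : s * (b k + c k) ≤ (2*C^2 + 3*C) * t := by
        have h6 : s * (b k + c k) ≤ s * ((2*C^2 + 3*C) * s) :=
          mul_le_mul_of_nonneg_left (by nlinarith [hbb k, hcb k]) hs.le
        have h7 : s * ((2*C^2 + 3*C) * s) = (2*C^2 + 3*C) * (s * s) := by ring
        have h8 : (2*C^2 + 3*C) * (s * s) ≤ (2*C^2 + 3*C) * t :=
          mul_le_mul_of_nonneg_left hst (by positivity)
        linarith
      have h9 : t * a k ≤ t * 1 := mul_le_mul_of_nonneg_left (ha1 k) ht.le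
      have h10 : C * (s * (b k + c k) + t * a k) ≤ C * ((2*C^2 + 3*C) * t + t) :=
        mul_le_mul_of_nonneg_left (by linarith) hC.le
      have : d (k+1) ≤ (k : ℝ) * (C * (2*C^2 + 3*C + 1)) * t + C * (2*C^2 + 3*C + 1) * t := by
        nlinarith
      push_cast
      linarith
  refine ⟨?_, ?_, ?_⟩
  · have h := hbb n
    have : (2*C^2 + C) * s ≤ (C * (2*C^2 + 3*C + 1) + 2*C^2 + 3*C + 1) * s :=
      mul_le_mul_of_nonneg_right (by nlinarith) hs.le
    linarith
  · have h := hcb n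
    have : 2 * C * s ≤ (C * (2*C^2 + 3*C + 1) + 2*C^2 + 3*C + 1) * s :=
      mul_le_mul_of_nonneg_right (by nlinarith) hs.le
    linarith
  · have h := hdb n
    have hn' : (0:ℝ) ≤ (n:ℝ) := Nat.cast_nonneg n
    have : (n : ℝ) * (C * (2*C^2 + 3*C + 1)) * t
        ≤ (C * (2*C^2 + 3*C + 1) + 2*C^2 + 3*C + 1) * n * t := by
      apply mul_le_mul_of_nonneg_right _ ht.le
      rw [mul_comm ((C * (2*C^2 + 3*C + 1) + 2*C^2 + 3*C + 1)) (n:ℝ)] at *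
      exact mul_le_mul_of_nonneg_left (by nlinarith) hn'
    linarith
end
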